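/- arXiv:1405.2234 — 2 statements merged into one kernel-verified Lean document; each statement's English description precedes it below -/
import Mathlib

section
/- In the construction of Theorem 4.2, the map sending v ∈ V(M) to {π₁(v)} ∪ {π₂(v) if v ∈ V(M₂)} induces a bisimulation between the pointed structure M (with nodes of X marked by distinct fresh propositions) and the structure M' (with the same markings); consequently v and πᵢ(v) are bisimilar for every v ∈ V(Mᵢ). -/
/-- Weak directed separation with interface `X`. -/
def WeakDirSep {V : Type*} (E : V → V → Prop) (V1 V2 X : Set V) : Prop :=
  V1 ∪ V2 = Set.univ ∧ X ⊆ V1 ∩ V2 ∧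
    (∀ u v, E u v → u ∈ V2 \ (V1 ∩ V2) → v ∉ V1 \ (V1 ∩ V2)) ∧
    (∀ u v, E u v → u ∈ (V1 ∩ V2) \ X → v ∉ V1 \ V2)

-- The map `π_b`: nodes of `X` are kept, all other nodes are tagged with side `b`.
open Classical in
noncomputable def glueMap {V : Type*} (X : Set V) (b : Bool) (v : V) : V ⊕ (Bool × V) :=
  if v ∈ X then Sum.inl v else Sum.inr (b, v)

/-- Edges of the glued structure `M'`. -/
def glueEdge {V : Type*} (E : V → V → Prop) (V1 V2 X : Set V)
    (a b : V ⊕ (Bool × V)) : Prop :=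
  (∃ v w, v ∈ V1 ∧ w ∈ V1 ∧ E v w ∧ a = glueMap X false v ∧ b = glueMap X false w) ∨
  (∃ v w, v ∈ V2 ∧ w ∈ V2 ∧ E v w ∧ a = glueMap X true v ∧ b = glueMap X true w) ∨
  (∃ v w, v ∈ V1 ∧ w ∈ V2 ∧ E v w ∧ a = glueMap X false v ∧ b = glueMap X true w)

/-- Valuation of atomic propositions on the glued structure, inherited from `M`. -/
def glueVal {V A : Type*} (val : A → Set V) (V1 V2 X : Set V) (a : A) :
    Set (V ⊕ (Bool × V)) :=
  glueMap X false '' (V1 ∩ val a) ∪ glueMap X true '' (V2 ∩ val a)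

/-- `R` is a bisimulation between the Kripke structures `(V, E, val)` and
`(W, E', val')`: it preserves atomic propositions and satisfies the forth and
back conditions. -/
def IsBisimulation {V W A : Type*} (E : V → V → Prop) (val : A → Set V)
    (E' : W → W → Prop) (val' : A → Set W) (R : Set (V × W)) : Prop :=
  (∀ v w, (v, w) ∈ R → ∀ a, v ∈ val a ↔ w ∈ val' a) ∧
  (∀ v w, (v, w) ∈ R → ∀ v', E v v' → ∃ w', E' w w' ∧ (v', w') ∈ R) ∧
  (∀ v w, (v, w) ∈ R → ∀ w', E' w w' → ∃ v', E v v' ∧ (v', w') ∈ R)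

/-!
A node of `M` is related to its copy on each side it belongs to. Atomic propositions
and the back condition hold because a node of `M'` determines the node of `M` it
copies, so every edge of `M'` is the image of an edge of `M`. The forth
condition is immediate except for an edge `v → w` with `v ∈ V₂` and `w ∉ V₂`: this is
where the separation is used, since it forces `v ∈ X`, where `π₂ v = π₁ v`, so that
the edge is the image of an edge inside `M₁`.
-/

namespace WeakDirSep

variable {V : Type*} {E : V → V → Prop} {V1 V2 X : Set V}

theorem mem_or_mem (h : WeakDirSep E V1 V2 X) (v : V) : v ∈ V1 ∨ v ∈ V2 :=
  Set.eq_univ_iff_forall.mp h.1 v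

theorem mem_of_edge_of_not_mem_right (h : WeakDirSep E V1 V2 X) {v w : V}
    (hv : v ∈ V2) (hE : E v w) (hw : w ∉ V2) : v ∈ X := by
  have hw1 : w ∈ V1 := (h.mem_or_mem w).resolve_right hw
  obtain ⟨-, -, hsep_outside, hsep_inside⟩ := h
  have hv1 : v ∈ V1 := by
    by_contra hv1
    exact hsep_outside v w hE ⟨hv, fun hv12 => hv1 hv12.1⟩ ⟨hw1, fun hw12 => hw hw12.2⟩
  by_contra hvX
  exact hsep_inside v w hE ⟨⟨hv1, hv⟩, hvX⟩ ⟨hw1, hw⟩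

end WeakDirSep

section Glue

variable {V A : Type*}

theorem eq_of_glueMap_eq {X : Set V} {b c : Bool} {v w : V}
    (h : glueMap X b v = glueMap X c w) : v = w := by
  unfold glueMap at h
  split_ifs at h <;> simp_all

theorem glueMap_of_mem {X : Set V} {v : V} (hv : v ∈ X) (b c : Bool) :
    glueMap X b v = glueMap X c v := by
  simp [glueMap, hv]

-- The tag `false` stands for side 1 and `true` for side 2.
def glueRel (V1 V2 X : Set V) : Set (V × (V ⊕ (Bool × V))) :=
  {p | (p.1 ∈ V1 ∧ p.2 = glueMap X false p.1) ∨ (p.1 ∈ V2 ∧ p.2 = glueMap X true p.1)}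

variable {E : V → V → Prop} {val : A → Set V} {V1 V2 X : Set V}

theorem mk_mem_glueRel_iff {v : V} {w : V ⊕ (Bool × V)} :
    (v, w) ∈ glueRel V1 V2 X ↔
      (v ∈ V1 ∧ w = glueMap X false v) ∨ (v ∈ V2 ∧ w = glueMap X true v) :=
  Iff.rfl

theorem mem_val_iff_of_mem_glueRel {v : V} {w : V ⊕ (Bool × V)}
    (hvw : (v, w) ∈ glueRel V1 V2 X) (a : A) : v ∈ val a ↔ w ∈ glueVal val V1 V2 X a := by
  have hsource : ∀ {b u}, glueMap X b u = w → u = v := by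
    rcases mk_mem_glueRel_iff.mp hvw with ⟨-, rfl⟩ | ⟨-, rfl⟩ <;> exact fun hu => eq_of_glueMap_eq hu
  constructor
  · intro ha
    rcases mk_mem_glueRel_iff.mp hvw with ⟨hv, rfl⟩ | ⟨hv, rfl⟩
    · exact Or.inl ⟨v, ⟨hv, ha⟩, rfl⟩
    · exact Or.inr ⟨v, ⟨hv, ha⟩, rfl⟩
  · rintro (⟨u, ⟨-, hu⟩, hw⟩ | ⟨u, ⟨-, hu⟩, hw⟩) <;> exact hsource hw ▸ hu

theorem glueRel_forth (h : WeakDirSep E V1 V2 X) {v : V} {w : V ⊕ (Bool × V)}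
    (hvw : (v, w) ∈ glueRel V1 V2 X) {v' : V} (hE : E v v') :
    ∃ w', glueEdge E V1 V2 X w w' ∧ (v', w') ∈ glueRel V1 V2 X := by
  rcases mk_mem_glueRel_iff.mp hvw with ⟨hv, rfl⟩ | ⟨hv, rfl⟩
  · rcases h.mem_or_mem v' with hv' | hv'
    · exact ⟨_, Or.inl ⟨v, v', hv, hv', hE, rfl, rfl⟩, Or.inl ⟨hv', rfl⟩⟩
    · exact ⟨_, Or.inr (Or.inr ⟨v, v', hv, hv', hE, rfl, rfl⟩), Or.inr ⟨hv', rfl⟩⟩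
  · by_cases hv' : v' ∈ V2
    · exact ⟨_, Or.inr (Or.inl ⟨v, v', hv, hv', hE, rfl, rfl⟩), Or.inr ⟨hv', rfl⟩⟩
    · have hvX := h.mem_of_edge_of_not_mem_right hv hE hv'
      have hv'1 := (h.mem_or_mem v').resolve_right hv'
      exact ⟨_, Or.inl ⟨v, v', (h.2.1 hvX).1, hv'1, hE, glueMap_of_mem hvX _ _, rfl⟩,
        Or.inl ⟨hv'1, rfl⟩⟩

theorem glueRel_back {v : V} {w : V ⊕ (Bool × V)} (hvw : (v, w) ∈ glueRel V1 V2 X)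
    {w' : V ⊕ (Bool × V)} (hE' : glueEdge E V1 V2 X w w') :
    ∃ v', E v v' ∧ (v', w') ∈ glueRel V1 V2 X := by
  have hsource : ∀ {b u}, w = glueMap X b u → u = v := by
    rcases mk_mem_glueRel_iff.mp hvw with ⟨-, rfl⟩ | ⟨-, rfl⟩ <;> exact fun hu => (eq_of_glueMap_eq hu).symm
  rcases hE' with ⟨u, u', -, hu', hE, hw, rfl⟩ | ⟨u, u', -, hu', hE, hw, rfl⟩ |
      ⟨u, u', -, hu', hE, hw, rfl⟩
  · exact ⟨u', hsource hw ▸ hE, Or.inl ⟨hu', rfl⟩⟩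
  · exact ⟨u', hsource hw ▸ hE, Or.inr ⟨hu', rfl⟩⟩
  · exact ⟨u', hsource hw ▸ hE, Or.inr ⟨hu', rfl⟩⟩

theorem isBisimulation_glueRel (h : WeakDirSep E V1 V2 X) :
    IsBisimulation E val (glueEdge E V1 V2 X) (glueVal val V1 V2 X) (glueRel V1 V2 X) :=
  ⟨fun _ _ hvw => mem_val_iff_of_mem_glueRel hvw,
    fun _ _ hvw _ hE => glueRel_forth h hvw hE,
    fun _ _ hvw _ hE' => glueRel_back hvw hE'⟩

end Glue

/-- In the construction of Theorem 4.2, the relation pairing every `v ∈ V(Mᵢ)`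
with `πᵢ(v)` is a bisimulation between `M` (with any valuation, in particular
one marking the interface nodes by distinct fresh propositions) and the glued
structure `M'` (with the inherited markings); consequently `v` and `πᵢ(v)` are
bisimilar for every `v ∈ V(Mᵢ)`. -/
theorem glue_bisimulation {V A : Type*} (E : V → V → Prop) (val : A → Set V)
    (V1 V2 X : Set V) (h : WeakDirSep E V1 V2 X) :
    IsBisimulation E val (glueEdge E V1 V2 X) (glueVal val V1 V2 X)
      {p | (p.1 ∈ V1 ∧ p.2 = glueMap X false p.1) ∨
           (p.1 ∈ V2 ∧ p.2 = glueMap X true p.1)} ∧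
    (∀ v ∈ V1, (v, glueMap X false v) ∈
      {p : V × (V ⊕ (Bool × V)) | (p.1 ∈ V1 ∧ p.2 = glueMap X false p.1) ∨
           (p.1 ∈ V2 ∧ p.2 = glueMap X true p.1)}) ∧
    (∀ v ∈ V2, (v, glueMap X true v) ∈
      {p : V × (V ⊕ (Bool × V)) | (p.1 ∈ V1 ∧ p.2 = glueMap X false p.1) ∨
           (p.1 ∈ V2 ∧ p.2 = glueMap X true p.1)}) :=
  ⟨isBisimulation_glueRel h, fun _ hv => Or.inl ⟨hv, rfl⟩, fun _ hv => Or.inr ⟨hv, rfl⟩⟩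
end

section
/- Let P be a parity game in which Player ◇ has a winning strategy from node v. Then Player ◇ has a positional winning strategy from v (positional determinacy restricted to the transfer direction): any winning strategy can be replaced by one whose moves depend only on the current node. -/
/-- `Hist Vd E σ v l`: `l` is a history (finite path) of the parity game with
◇-nodes `Vd` and edges `E`, starting at `v` and conforming to Player ◇'s
strategy `σ` (a function from histories to moves). -/
inductive Hist {V : Type*} (Vd : Set V) (E : V → V → Prop) (σ : List V → V)
    (v : V) : List V → Prop
  | base : Hist Vd E σ v [v]
  | step {l : List V} {u w : V} : Hist Vd E σ v (l ++ [u]) → E u w →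
      (u ∈ Vd → w = σ (l ++ [u])) → Hist Vd E σ v (l ++ [u] ++ [w])

/-- `σ` is a winning strategy for Player ◇ from `v` in the parity game
`(V, Vd, E, ω)`: every maximal finite conforming play ends in a node where the
opponent is stuck, and every infinite conforming play satisfies the parity
condition (the minimum priority occurring infinitely often is even). -/
def WinningFrom {V : Type*} (Vd : Set V) (E : V → V → Prop) (ω : V → ℕ)
    (σ : List V → V) (v : V) : Prop :=
  (∀ (l : List V) (u : V), Hist Vd E σ v (l ++ [u]) →
    (∀ w, ¬ Hist Vd E σ v (l ++ [u] ++ [w])) → u ∉ Vd) ∧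
  (∀ f : ℕ → V, f 0 = v →
    (∀ n : ℕ, Hist Vd E σ v (List.ofFn fun i : Fin (n + 1) => f i)) →
    ∃ p, Even p ∧ {n | ω (f n) = p}.Infinite ∧
      ∀ q, q < p → {n | ω (f n) = q}.Finite)

/-!
For an odd priority `p`, a σ-history `x` is a `p`-descent of `m` if it extends `m` by a segment
whose least priority is `p`, attained at its last node. An infinite chain of `p`-descents would be
a σ-play whose least recurring priority is the odd `p`, so `p`-descent is well founded and every
history has an ordinal rank for each odd `p`. The vector of these ranks is a signature: along a
σ-move to `w` the coordinates up to `ω w` do not increase, and coordinate `ω w` drops if it is odd.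

The positional strategy plays at `u` what σ plays after a history ending in `u` of lexicographically
least signature. Along any of its plays, these least signatures, truncated at the least recurring
priority `p`, eventually never increase and drop at every visit to `p`; hence `p` is even.
-/

open Filter

namespace Hist

variable {V : Type*} {Vd : Set V} {E : V → V → Prop} {σ : List V → V} {v : V}

theorem head?_eq {m : List V} (h : Hist Vd E σ v m) : m.head? = some v := by
  induction h with
  | base => rfl
  | @step l u w _ _ _ ih => cases l <;> simp_all

theorem step_iff {l : List V} {u w : V} :
    Hist Vd E σ v (l ++ [u] ++ [w]) ↔
      Hist Vd E σ v (l ++ [u]) ∧ E u w ∧ (u ∈ Vd → w = σ (l ++ [u])) := by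
  refine ⟨fun h => ?_, fun ⟨h, huw, hmove⟩ => h.step huw hmove⟩
  generalize hm : l ++ [u] ++ [w] = m at h
  cases h with
  | base => simpa using congrArg List.length hm
  | step h huw hmove =>
    obtain ⟨hlu, hw⟩ := List.append_inj' hm rfl
    obtain ⟨rfl, hu⟩ := List.append_inj' hlu rfl
    obtain ⟨rfl⟩ := List.singleton_inj.1 hu
    obtain ⟨rfl⟩ := List.singleton_inj.1 hw
    exact ⟨h, huw, hmove⟩

theorem of_prefix {l m : List V} (h : Hist Vd E σ v m) (hlm : l <+: m) (hl : l ≠ []) :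
    Hist Vd E σ v l := by
  induction h with
  | base =>
    obtain rfl | hnil := List.prefix_concat_iff (l₂ := []).1 hlm
    · exact base
    · exact absurd (List.prefix_nil.1 hnil) hl
  | step h huw hmove ih =>
    obtain rfl | hlm := List.prefix_concat_iff.1 hlm
    · exact h.step huw hmove
    · exact ih hlm

end Hist

section Chains

variable {α : Type*} {g : ℕ → List α}

theorem exists_limit_of_prefix_chain (hpre : ∀ n, g n <+: g (n + 1))
    (hlen : ∀ n, n < (g n).length) :
    ∃ f : ℕ → α, ∀ n k (hk : k < (g n).length), (g n)[k] = f k := by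
  have hmono : ∀ m n, m ≤ n → g m <+: g n := fun m n hmn => by
    induction n, hmn using Nat.le_induction with
    | base => exact List.prefix_refl _
    | succ n _ ih => exact ih.trans (hpre n)
  refine ⟨fun k => (g k)[k]'(hlen k), fun n k hk => ?_⟩
  rcases le_total k n with hkn | hnk
  · exact ((hmono k n hkn).getElem (hlen k)).symm
  · exact (hmono n k hnk).getElem hk

theorem exists_mem_of_append_chain {s : ℕ → List α} (hg : ∀ n, g (n + 1) = g n ++ s n)
    {k : ℕ} (hk0 : (g 0).length ≤ k) (n : ℕ) (hk : k < (g n).length) :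
    ∃ m, (g n)[k] ∈ s m := by
  induction n with
  | zero => omega
  | succ n ih =>
    by_cases hkn : k < (g n).length
    · obtain ⟨m, hm⟩ := ih hkn
      exact ⟨m, by rwa [List.getElem_of_eq (hg n), List.getElem_append_left hkn]⟩
    · refine ⟨n, ?_⟩
      rw [List.getElem_of_eq (hg n), List.getElem_append_right (not_lt.1 hkn)]
      exact List.getElem_mem _

end Chains

section Priorities

variable {π : ℕ → ℕ} {p : ℕ}

theorem exists_min_infinite_fiber (hπ : (Set.range π).Finite) :
    ∃ p, {k | π k = p}.Infinite ∧ ∀ q < p, {k | π k = q}.Finite := by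
  classical
  have hex : ∃ p, {k | π k = p}.Infinite := by
    by_contra! hfin
    refine Set.infinite_univ ((hπ.biUnion fun q _ => hfin q).subset fun k _ => ?_)
    exact Set.mem_biUnion (Set.mem_range_self k) rfl
  exact ⟨Nat.find hex, Nat.find_spec hex, fun q hq => Set.not_infinite.1 (Nat.find_min hex hq)⟩

theorem eventually_le_of_finite_lt (h : ∀ q < p, {k | π k = q}.Finite) :
    ∀ᶠ k in atTop, p ≤ π k := by
  have hall : ∀ᶠ k in atTop, ∀ q ∈ Set.Iio p, π k ≠ q :=
    (eventually_all_finite (Set.finite_Iio p)).2 fun q hq => by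
      rw [← Nat.cofinite_eq_atTop, eventually_cofinite]
      simpa using h q hq
  filter_upwards [hall] with k hk
  by_contra! hlt
  exact hk _ hlt rfl

theorem eq_of_infinite_of_eventually_le {p' : ℕ} (hp : {k | π k = p}.Infinite)
    (hge : ∀ᶠ k in atTop, p ≤ π k) (hp' : {k | π k = p'}.Infinite)
    (hmin' : ∀ q < p', {k | π k = q}.Finite) : p' = p := by
  rcases lt_trichotomy p' p with hlt | heq | hgt
  · rw [← Nat.cofinite_eq_atTop, eventually_cofinite] at hge
    exact absurd (hge.subset fun k hk => by simp_all) hp'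
  · exact heq
  · exact absurd (hmin' p hgt) hp

end Priorities

theorem not_frequently_lt_of_eventually_le {α : Type*} [Preorder α] [WellFoundedLT α]
    {a : ℕ → α} (h : ∀ᶠ k in atTop, a (k + 1) ≤ a k) : ¬ ∃ᶠ k in atTop, a (k + 1) < a k := by
  intro hlt
  obtain ⟨N, hN⟩ := eventually_atTop.1 h
  have hanti : ∀ m k, N ≤ m → m ≤ k → a k ≤ a m := by
    intro m k hm hmk
    induction k, hmk using Nat.le_induction with
    | base => exact le_rfl
    | succ k hmk ih => exact (hN k (hm.trans hmk)).trans ih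
  obtain ⟨_, ⟨m, hm, rfl⟩, hmin⟩ :=
    wellFounded_lt.has_min (a '' Set.Ici N) ⟨a N, N, Set.self_mem_Ici, rfl⟩
  obtain ⟨k, hmk, hk⟩ := frequently_atTop.1 hlt m
  exact hmin _ ⟨k + 1, by simp only [Set.mem_Ici] at hm ⊢; omega, rfl⟩
    (hk.trans_le (hanti m k hm hmk))

section Truncation

variable {n : ℕ} {β : Type*}

def truncate [Bot β] (q : ℕ) (x : Fin n → β) : Fin n → β :=
  fun i => if (i : ℕ) ≤ q then x i else ⊥

theorem truncate_truncate [Bot β] {x : Fin n → β} {p q : ℕ} (hpq : p ≤ q) :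
    truncate p (truncate q x) = truncate p x := by
  funext i
  by_cases hi : (i : ℕ) ≤ p
  · simp [truncate, hi, hi.trans hpq]
  · simp [truncate, hi]

variable [PartialOrder β] [Bot β] {x y : Fin n → β} {q : ℕ}

theorem toLex_truncate_mono (h : toLex x ≤ toLex y) :
    toLex (truncate q x) ≤ toLex (truncate q y) := by
  obtain hxy | ⟨i, hagree, hi⟩ := h.eq_or_lt
  · rw [toLex.injective hxy]
  by_cases hiq : (i : ℕ) ≤ q
  · refine le_of_lt ⟨i, fun j hj => ?_, by simpa [truncate, hiq] using hi⟩
    have hxy : x j = y j := hagree j hj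
    simp [truncate, hxy]
  · refine le_of_eq (congrArg toLex (funext fun j => ?_))
    by_cases hjq : (j : ℕ) ≤ q
    · have hxy : x j = y j := hagree j (show (j : ℕ) < i by omega)
      simp [truncate, hxy]
    · simp [truncate, hjq]

theorem toLex_truncate_le_of_forall_le (h : ∀ i : Fin n, (i : ℕ) ≤ q → x i ≤ y i) :
    toLex (truncate q x) ≤ toLex (truncate q y) :=
  Pi.toLex_monotone fun i => by
    by_cases hi : (i : ℕ) ≤ q
    · simpa [truncate, hi] using h i hi
    · simp [truncate, hi]

theorem toLex_truncate_lt_of_forall_le (h : ∀ i : Fin n, (i : ℕ) ≤ q → x i ≤ y i)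
    (i : Fin n) (hiq : (i : ℕ) = q) (hi : x i < y i) :
    toLex (truncate q x) < toLex (truncate q y) :=
  Pi.toLex_strictMono <| Pi.lt_def.2
    ⟨fun j => by
      by_cases hj : (j : ℕ) ≤ q
      · simpa [truncate, hj] using h j hj
      · simp [truncate, hj],
     i, by simpa [truncate, hiq.le] using hi⟩

end Truncation

theorem even_of_truncate_descent {n : ℕ} {β : Type*} [LinearOrder β] [Bot β] [WellFoundedLT β]
    {a : ℕ → Fin n → β} {π : ℕ → ℕ} {p : ℕ}
    (hle : ∀ k, toLex (truncate (π (k + 1)) (a (k + 1))) ≤ toLex (truncate (π (k + 1)) (a k)))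
    (hlt : ∀ k, Odd (π (k + 1)) →
      toLex (truncate (π (k + 1)) (a (k + 1))) < toLex (truncate (π (k + 1)) (a k)))
    (hp : {k | π k = p}.Infinite) (hmin : ∀ q < p, {k | π k = q}.Finite) : Even p := by
  by_contra hodd
  rw [Nat.not_even_iff_odd] at hodd
  have hge : ∀ᶠ k in atTop, p ≤ π (k + 1) :=
    (tendsto_add_atTop_nat 1).eventually (eventually_le_of_finite_lt hmin)
  have hfreq : ∃ᶠ k in atTop, π (k + 1) = p := frequently_atTop.2 fun N => by
    obtain ⟨k, hk, hpk⟩ := frequently_atTop.1 (Nat.frequently_atTop_iff_infinite.2 hp) (N + 1)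
    exact ⟨k - 1, by omega, by rwa [Nat.sub_add_cancel (by omega)]⟩
  refine not_frequently_lt_of_eventually_le (a := fun k => toLex (truncate p (a k))) ?_ ?_
  · filter_upwards [hge] with k hk
    simpa only [truncate_truncate hk] using toLex_truncate_mono (q := p) (hle k)
  · refine hfreq.mono fun k hk => ?_
    have hdesc := hlt k (hk ▸ hodd)
    rw [hk] at hdesc
    exact hdesc

theorem IsWellFounded.rank_le_rank_of_forall {α : Type*} {r : α → α → Prop} [IsWellFounded α r]
    {a b : α} (h : ∀ c, r c a → r c b) : IsWellFounded.rank r a ≤ IsWellFounded.rank r b := by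
  rw [IsWellFounded.rank_eq r a]
  exact Ordinal.iSup_le fun c => Order.succ_le_of_lt (rank_lt_of_rel (h c.1 c.2))

namespace ParityGame

universe u

variable {V : Type u} (Vd : Set V) (E : V → V → Prop) (ω : V → ℕ) (σ : List V → V) (v : V)

def OddDescent (p : ℕ) (x m : List V) : Prop :=
  Odd p ∧ Hist Vd E σ v x ∧ ∃ t w, x = m ++ t ++ [w] ∧ ω w = p ∧ ∀ a ∈ t, p ≤ ω a

structure IsSignature {n : ℕ} {β : Type*} [Preorder β] (M : List V → Fin n → β) : Prop where
  le_of_le : ∀ m w (i : Fin n), Hist Vd E σ v (m ++ [w]) → (i : ℕ) ≤ ω w → M (m ++ [w]) i ≤ M m i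
  lt_of_odd : ∀ m w (i : Fin n), Hist Vd E σ v (m ++ [w]) → (i : ℕ) = ω w → Odd (ω w) →
    M (m ++ [w]) i < M m i

def Reachable (u : V) : Prop := ∃ l, Hist Vd E σ v (l ++ [u])

variable {Vd E ω σ v}

theorem wellFounded_oddDescent (hwin : WinningFrom Vd E ω σ v) (p : ℕ) :
    WellFounded (OddDescent Vd E ω σ v p) := by
  refine wellFounded_iff_isEmpty_descending_chain.2 ⟨fun ⟨g, hg⟩ => ?_⟩
  choose hp hhist t w hgeq hw ht using hg
  have hext : ∀ n, g (n + 2) = g (n + 1) ++ (t (n + 1) ++ [w (n + 1)]) := fun n => by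
    rw [hgeq, List.append_assoc]
  have hlen : ∀ n, n < (g (n + 1)).length := by
    intro n
    induction n with
    | zero => simp [hgeq 0]
    | succ n ih =>
      simp only [hext n, List.length_append, List.length_singleton]
      omega
  obtain ⟨f, hf⟩ := exists_limit_of_prefix_chain (g := fun n => g (n + 1))
    (fun n => ⟨_, (hext n).symm⟩) hlen
  have hplay : ∀ n, Hist Vd E σ v (List.ofFn fun i : Fin (n + 1) => f i) := fun n =>
    (hhist n).of_prefix (List.prefix_iff_getElem.2 ⟨by simpa using hlen n,
      fun i hi => by rw [List.getElem_ofFn, hf]⟩) (by simp)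
  have hinf : {k | ω (f k) = p}.Infinite := by
    refine Nat.frequently_atTop_iff_infinite.1 (frequently_atTop.2 fun N =>
      ⟨(g (N + 1)).length - 1, by have := hlen N; omega, ?_⟩)
    rw [← hf N _ (by have := hlen N; omega)]
    simp [hgeq N, hw N]
  have hge : ∀ k, (g 1).length ≤ k → p ≤ ω (f k) := fun k hk => by
    obtain ⟨m, hm⟩ := exists_mem_of_append_chain (g := fun n => g (n + 1)) hext hk k (hlen k)
    rw [hf] at hm
    rcases List.mem_append.1 hm with hm | hm
    · exact ht _ _ hm
    · rw [List.mem_singleton.1 hm, hw]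
  obtain ⟨p', hp'even, hp'inf, hp'min⟩ := hwin.2 f (by simpa using (hplay 0).head?_eq) hplay
  have hp'p : p' = p := eq_of_infinite_of_eventually_le (π := fun k => ω (f k)) hinf
    (eventually_atTop.2 ⟨_, hge⟩) hp'inf hp'min
  exact Nat.not_even_iff_odd.2 (hp 0) (hp'p ▸ hp'even)

theorem exists_isSignature (hwin : WinningFrom Vd E ω σ v) (n : ℕ) :
    ∃ M : List V → Fin n → Ordinal.{u}, IsSignature Vd E ω σ v M := by
  have := fun p => (⟨wellFounded_oddDescent hwin p⟩ : IsWellFounded _ (OddDescent Vd E ω σ v p))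
  refine ⟨fun m i => IsWellFounded.rank (OddDescent Vd E ω σ v i) m, ⟨?_, ?_⟩⟩
  · rintro m w i - hiw
    refine IsWellFounded.rank_le_rank_of_forall ?_
    rintro x ⟨hodd, hx, t, w', rfl, hw', ht⟩
    refine ⟨hodd, hx, w :: t, w', by simp, hw', fun a ha => ?_⟩
    rcases List.mem_cons.1 ha with rfl | ha
    · exact hiw
    · exact ht a ha
  · rintro m w i hmw hiw hodd
    exact IsWellFounded.rank_lt_of_rel ⟨hiw ▸ hodd, hmw, [], w, by simp, hiw.symm, by simp⟩

def representativeStrategy (σ : List V → V) (B : V → List V) (v : V) (l : List V) : V :=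
  σ (B (l.getLastD v) ++ [l.getLastD v])

section Representative

variable {B : V → List V}

theorem representativeStrategy_append_singleton (l : List V) (u : V) :
    representativeStrategy σ B v (l ++ [u]) = σ (B u ++ [u]) := by
  simp [representativeStrategy]

theorem toLex_truncate_signature_step {n : ℕ} {β : Type*} [LinearOrder β] [Bot β]
    {M : List V → Fin n → β} (hM : IsSignature Vd E ω σ v M)
    (hBmin : ∀ u, Reachable Vd E σ v u → ∀ l, Hist Vd E σ v (l ++ [u]) →
      toLex (M (B u ++ [u])) ≤ toLex (M (l ++ [u])))
    {u w : V} (h : Hist Vd E σ v (B u ++ [u] ++ [w])) :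
    toLex (truncate (ω w) (M (B w ++ [w]))) ≤ toLex (truncate (ω w) (M (B u ++ [u]))) ∧
      (Odd (ω w) → ω w < n →
        toLex (truncate (ω w) (M (B w ++ [w]))) < toLex (truncate (ω w) (M (B u ++ [u])))) := by
  have hbest := toLex_truncate_mono (q := ω w) (hBmin w ⟨_, h⟩ _ h)
  have hstep := fun i hi => hM.le_of_le (B u ++ [u]) w i h hi
  exact ⟨hbest.trans (toLex_truncate_le_of_forall_le hstep), fun hodd hwn =>
    hbest.trans_lt (toLex_truncate_lt_of_forall_le hstep ⟨ω w, hwn⟩ rfl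
      (hM.lt_of_odd _ w _ h rfl hodd))⟩

variable (hB : ∀ u, Reachable Vd E σ v u → Hist Vd E σ v (B u ++ [u]))
include hB

theorem hist_representative_step {l : List V} {u w : V} (hu : Reachable Vd E σ v u)
    (h : Hist Vd E (representativeStrategy σ B v) v (l ++ [u] ++ [w])) :
    Hist Vd E σ v (B u ++ [u] ++ [w]) := by
  obtain ⟨-, huw, hmove⟩ := Hist.step_iff.1 h
  rw [representativeStrategy_append_singleton] at hmove
  exact (hB u hu).step huw hmove

theorem reachable_of_hist_representativeStrategy {l : List V} {u : V}
    (h : Hist Vd E (representativeStrategy σ B v) v (l ++ [u])) : Reachable Vd E σ v u := by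
  suffices ∀ m, Hist Vd E (representativeStrategy σ B v) v m →
      ∀ u ∈ m.getLast?, Reachable Vd E σ v u from this _ h u (by simp)
  intro m hm
  induction hm with
  | base =>
    intro u hu
    obtain rfl := Option.mem_some_iff.1 hu
    exact ⟨[], Hist.base⟩
  | step h huw hmove ih =>
    intro u' hu'
    obtain rfl : _ = u' := by simpa using hu'
    exact ⟨_, hist_representative_step hB (ih _ (by simp)) (h.step huw hmove)⟩

theorem representativeStrategy_not_mem_of_stuck (hwin : WinningFrom Vd E ω σ v) {l : List V}
    {u : V} (h : Hist Vd E (representativeStrategy σ B v) v (l ++ [u]))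
    (hstuck : ∀ w, ¬ Hist Vd E (representativeStrategy σ B v) v (l ++ [u] ++ [w])) : u ∉ Vd := by
  intro hu
  refine hwin.1 (B u) u (hB u (reachable_of_hist_representativeStrategy hB h))
    (fun w hw => hstuck w ?_) hu
  obtain ⟨-, huw, hmove⟩ := Hist.step_iff.1 hw
  exact h.step huw (by rwa [representativeStrategy_append_singleton])

theorem representativeStrategy_parity_condition {n : ℕ} {β : Type*} [LinearOrder β] [Bot β]
    [WellFoundedLT β] (hn : ∀ x, ω x < n) {M : List V → Fin n → β}
    (hM : IsSignature Vd E ω σ v M)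
    (hBmin : ∀ u, Reachable Vd E σ v u → ∀ l, Hist Vd E σ v (l ++ [u]) →
      toLex (M (B u ++ [u])) ≤ toLex (M (l ++ [u])))
    {f : ℕ → V} (hplay : ∀ k, Hist Vd E (representativeStrategy σ B v) v
      (List.ofFn fun i : Fin (k + 1) => f i)) :
    ∃ p, Even p ∧ {k | ω (f k) = p}.Infinite ∧ ∀ q < p, {k | ω (f k) = q}.Finite := by
  have hsnoc : ∀ k, (List.ofFn fun i : Fin (k + 1) => f i) =
      (List.ofFn fun i : Fin k => f i) ++ [f k] := fun _ => List.ofFn_succ_last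
  have hstep : ∀ k, Hist Vd E σ v (B (f k) ++ [f k] ++ [f (k + 1)]) := fun k => by
    have h := hplay (k + 1)
    rw [hsnoc, hsnoc] at h
    exact hist_representative_step hB
      (reachable_of_hist_representativeStrategy hB (hsnoc k ▸ hplay k)) h
  obtain ⟨p, hp, hmin⟩ := exists_min_infinite_fiber
    ((Set.finite_Iio n).subset (Set.range_subset_iff.2 fun k => hn (f k)))
  have hdesc := fun k => toLex_truncate_signature_step hM hBmin (hstep k)
  exact ⟨p, even_of_truncate_descent (a := fun k => M (B (f k) ++ [f k]))
    (fun k => (hdesc k).1) (fun k hodd => (hdesc k).2 hodd (hn _)) hp hmin, hp, hmin⟩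

end Representative

theorem exists_positional_winningFrom {n : ℕ} {β : Type*} [LinearOrder β] [Bot β]
    [WellFoundedLT β] (hn : ∀ x, ω x < n) (hwin : WinningFrom Vd E ω σ v)
    {M : List V → Fin n → β} (hM : IsSignature Vd E ω σ v M) :
    ∃ σ' : List V → V, WinningFrom Vd E ω σ' v ∧
      ∀ (l l' : List V) (u : V), σ' (l ++ [u]) = σ' (l' ++ [u]) := by
  have hbest : ∀ u, Reachable Vd E σ v u → ∃ m, Hist Vd E σ v (m ++ [u]) ∧
      ∀ l, Hist Vd E σ v (l ++ [u]) → toLex (M (m ++ [u])) ≤ toLex (M (l ++ [u])) := by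
    rintro u ⟨l, hl⟩
    let s := {l | Hist Vd E σ v (l ++ [u])}
    exact ⟨_, Function.argminOn_mem _ s ⟨l, hl⟩,
      fun l' hl' => Function.argminOn_le (fun m => toLex (M (m ++ [u]))) s (a := l') hl'⟩
  choose! B hB hBmin using hbest
  refine ⟨representativeStrategy σ B v, ⟨fun l u h hstuck => ?_, fun f _ hplay => ?_⟩,
    fun l l' u => by simp only [representativeStrategy_append_singleton]⟩
  · exact representativeStrategy_not_mem_of_stuck hB hwin h hstuck
  · exact representativeStrategy_parity_condition hB hn hM hBmin hplay

end ParityGame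

/-- Positional determinacy (transfer direction): if Player ◇ has a winning
strategy from `v` in a parity game with finitely many priorities, then she has a
positional winning strategy from `v`, i.e. one whose moves depend only on the
current node. -/
theorem parity_positional_determinacy {V : Type*} (Vd : Set V)
    (E : V → V → Prop) (ω : V → ℕ) (hω : (Set.range ω).Finite)
    (σ : List V → V) (v : V) (hwin : WinningFrom Vd E ω σ v) :
    ∃ σ' : List V → V, WinningFrom Vd E ω σ' v ∧
      ∀ (l l' : List V) (u : V), σ' (l ++ [u]) = σ' (l' ++ [u]) := by
  obtain ⟨n, hn⟩ : ∃ n, ∀ x, ω x < n := by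
    obtain ⟨b, hb⟩ := hω.bddAbove
    exact ⟨b + 1, fun x => Nat.lt_succ_of_le (hb ⟨x, rfl⟩)⟩
  obtain ⟨M, hM⟩ := ParityGame.exists_isSignature hwin n
  exact ParityGame.exists_positional_winningFrom hn hwin hM
end
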